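/- Let w : ℝᴺ → ℝᴺ be continuous, let K > 0 and ε > 0, and suppose that Q_w(a, b) ≥ ε for all a, b ∈ ℝᴺ with ‖a − b‖ ≥ K. Then for every natural number n and all x, y ∈ ℝᴺ with ‖x − y‖ ≥ n·K one has Q_w(x, y) ≥ n·ε; consequently, Q_w(x, y) ≥ (ε/K)·‖x − y‖ − ε for all x, y ∈ ℝᴺ. (Chaining argument: a uniform positive lower bound on the quasipotential at scale K forces at least linear growth of the quasipotential in the distance between the endpoints.) -/

import Mathlib

/-!
A path from `x` to `y` with `‖x - y‖ ≥ (n + 1) K` crosses the sphere of radius `K` about `x` at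
some interior time `t`. Cutting it there and restarting the second piece at time `0` shows that its
action is at least `Q(x, φ t) + Q(φ t, y) ≥ ε + n ε`; additivity of the action needs the integrand
`‖g - w ∘ φ‖²` to be integrable, which holds because `w ∘ φ` is bounded on the compact time
interval. The linear bound follows by taking `n = ⌊‖x - y‖ / K⌋`.
-/
open MeasureTheory Set

/-- A path `φ : [T₁,T₂] → ℝᴺ` is admissible with derivative `g` if `g` is measurable with
square-integrable norm on `[T₁,T₂]` and `φ(t) = φ(T₁) + ∫_{T₁}^t g(s) ds` on `[T₁,T₂]`. -/
def IsAdmissiblePath (N : ℕ) (T₁ T₂ : ℝ)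
    (φ g : ℝ → EuclideanSpace ℝ (Fin N)) : Prop :=
  Measurable g ∧
  MeasureTheory.IntegrableOn (fun t => ‖g t‖ ^ 2) (Set.Icc T₁ T₂) ∧
  ∀ t ∈ Set.Icc T₁ T₂, φ t = φ T₁ + ∫ s in T₁..t, g s

/-- The Freidlin–Wentzell quasipotential of a vector field `u` between `x` and `y`. -/
noncomputable def quasipotential (N : ℕ)
    (u : EuclideanSpace ℝ (Fin N) → EuclideanSpace ℝ (Fin N))
    (x y : EuclideanSpace ℝ (Fin N)) : ℝ :=
  sInf {a : ℝ | ∃ T : ℝ, 0 < T ∧ ∃ φ g : ℝ → EuclideanSpace ℝ (Fin N),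
    IsAdmissiblePath N 0 T φ g ∧ φ 0 = x ∧ φ T = y ∧
    a = (1 / 4) * ∫ t in Set.Icc 0 T, ‖g t - u (φ t)‖ ^ 2}

section

variable {N : ℕ}

namespace IsAdmissiblePath

variable {T₁ T₂ : ℝ} {φ g : ℝ → EuclideanSpace ℝ (Fin N)}

theorem memLp_two (hp : IsAdmissiblePath N T₁ T₂ φ g) :
    MemLp g 2 (volume.restrict (Icc T₁ T₂)) :=
  (memLp_two_iff_integrable_sq_norm hp.1.aestronglyMeasurable).2 hp.2.1

theorem integrableOn (hp : IsAdmissiblePath N T₁ T₂ φ g) : IntegrableOn g (Icc T₁ T₂) :=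
  hp.memLp_two.integrable one_le_two

theorem continuousOn (hp : IsAdmissiblePath N T₁ T₂ φ g) : ContinuousOn φ (Icc T₁ T₂) := by
  rcases le_or_gt T₁ T₂ with h | h
  · have hint : IntegrableOn g (uIcc T₁ T₂) := by rw [uIcc_of_le h]; exact hp.integrableOn
    have hprim := continuousOn_const (c := φ T₁).add
      (intervalIntegral.continuousOn_primitive_interval hint)
    rw [uIcc_of_le h] at hprim
    exact hprim.congr hp.2.2
  · simp [Icc_eq_empty_of_lt h]

theorem mono {S₁ S₂ : ℝ} (hp : IsAdmissiblePath N T₁ T₂ φ g) (h₁ : T₁ ≤ S₁) (h₂ : S₂ ≤ T₂) :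
    IsAdmissiblePath N S₁ S₂ φ g := by
  refine ⟨hp.1, hp.2.1.mono_set (Icc_subset_Icc h₁ h₂), fun t ht => ?_⟩
  have hint : ∀ s ∈ Icc T₁ T₂, IntervalIntegrable g volume T₁ s := fun s hs =>
    (intervalIntegrable_iff_integrableOn_Icc_of_le hs.1).2
      (hp.integrableOn.mono_set (Icc_subset_Icc_right hs.2))
  have hS₁ : S₁ ∈ Icc T₁ T₂ := ⟨h₁, ht.1.trans (ht.2.trans h₂)⟩
  have ht' : t ∈ Icc T₁ T₂ := ⟨h₁.trans ht.1, ht.2.trans h₂⟩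
  rw [hp.2.2 t ht', hp.2.2 S₁ hS₁, add_assoc,
    ← intervalIntegral.integral_interval_sub_left (hint t ht') (hint S₁ hS₁)]
  abel

theorem comp_add_right (hp : IsAdmissiblePath N T₁ T₂ φ g) (c : ℝ) :
    IsAdmissiblePath N (T₁ - c) (T₂ - c) (fun t => φ (t + c)) (fun t => g (t + c)) := by
  have hpres := measurePreserving_add_right volume c
  have hemb := measurableEmbedding_addRight c
  refine ⟨hp.1.comp (measurable_add_const c), ?_, fun t ht => ?_⟩
  · rw [← preimage_add_const_Icc]
    exact (hpres.integrableOn_comp_preimage hemb).2 hp.2.1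
  · have ht' : t + c ∈ Icc T₁ T₂ := by rw [← preimage_add_const_Icc] at ht; exact ht
    simp only [sub_add_cancel, intervalIntegral.integral_comp_add_right (fun s => g s) c]
    exact hp.2.2 _ ht'

theorem integrableOn_sq_norm_sub_comp {u : EuclideanSpace ℝ (Fin N) → EuclideanSpace ℝ (Fin N)}
    (hu : Continuous u) (hp : IsAdmissiblePath N T₁ T₂ φ g) :
    IntegrableOn (fun t => ‖g t - u (φ t)‖ ^ 2) (Icc T₁ T₂) := by
  have huφ : ContinuousOn (fun t => u (φ t)) (Icc T₁ T₂) := hu.comp_continuousOn hp.continuousOn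
  obtain ⟨C, hC⟩ := isCompact_Icc.exists_bound_of_continuousOn huφ
  have hb : MemLp (fun t => u (φ t)) 2 (volume.restrict (Icc T₁ T₂)) :=
    MemLp.of_bound (huφ.aestronglyMeasurable measurableSet_Icc) C
      ((ae_restrict_iff' measurableSet_Icc).2 (Filter.Eventually.of_forall hC))
  have hdiff := hp.memLp_two.sub hb
  exact (memLp_two_iff_integrable_sq_norm hdiff.1).1 hdiff

theorem exists_norm_sub_eq {r : ℝ} (hp : IsAdmissiblePath N T₁ T₂ φ g) (hT : T₁ ≤ T₂) (hr : 0 < r) (hrT : r < ‖φ T₂ - φ T₁‖) :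
    ∃ t ∈ Ioo T₁ T₂, ‖φ t - φ T₁‖ = r := by
  have hcont : ContinuousOn (fun t => ‖φ t - φ T₁‖) (Icc T₁ T₂) :=
    (hp.continuousOn.sub continuousOn_const).norm
  obtain ⟨t, ht, hφt⟩ := intermediate_value_Icc hT hcont ⟨by simpa using hr.le, hrT.le⟩
  refine ⟨t, ⟨lt_of_le_of_ne ht.1 ?_, lt_of_le_of_ne ht.2 ?_⟩, hφt⟩
  · rintro rfl
    simp [hr.ne] at hφt
  · rintro rfl
    exact hrT.ne' hφt

end IsAdmissiblePath

theorem isAdmissiblePath_add_smul (T : ℝ) (x v : EuclideanSpace ℝ (Fin N)) :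
    IsAdmissiblePath N 0 T (fun t => x + t • v) (fun _ => v) :=
  ⟨measurable_const, integrableOn_const measure_Icc_lt_top.ne, fun t _ => by simp⟩

noncomputable def fwAction (N : ℕ) (u : EuclideanSpace ℝ (Fin N) → EuclideanSpace ℝ (Fin N))
    (T₁ T₂ : ℝ) (φ g : ℝ → EuclideanSpace ℝ (Fin N)) : ℝ :=
  (1 / 4) * ∫ t in Icc T₁ T₂, ‖g t - u (φ t)‖ ^ 2

section fwAction

variable {u : EuclideanSpace ℝ (Fin N) → EuclideanSpace ℝ (Fin N)} {T₁ T₂ : ℝ}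
  {φ g : ℝ → EuclideanSpace ℝ (Fin N)}

theorem fwAction_nonneg : 0 ≤ fwAction N u T₁ T₂ φ g :=
  mul_nonneg (by norm_num) (setIntegral_nonneg measurableSet_Icc fun _ _ => by positivity)

theorem fwAction_add {t : ℝ} (hf : IntegrableOn (fun t => ‖g t - u (φ t)‖ ^ 2) (Icc T₁ T₂))
    (ht : t ∈ Icc T₁ T₂) :
    fwAction N u T₁ T₂ φ g = fwAction N u T₁ t φ g + fwAction N u t T₂ φ g := by
  have hint : ∀ a b, T₁ ≤ a → a ≤ b → b ≤ T₂ →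
      IntervalIntegrable (fun t => ‖g t - u (φ t)‖ ^ 2) volume a b := fun a b ha hab hb =>
    (intervalIntegrable_iff_integrableOn_Icc_of_le hab).2 (hf.mono_set (Icc_subset_Icc ha hb))
  simp only [fwAction, integral_Icc_eq_integral_Ioc, ← intervalIntegral.integral_of_le ht.1,
    ← intervalIntegral.integral_of_le ht.2, ← intervalIntegral.integral_of_le (ht.1.trans ht.2),
    ← mul_add, ← intervalIntegral.integral_add_adjacent_intervals
      (hint T₁ t le_rfl ht.1 ht.2) (hint t T₂ ht.1 ht.2 le_rfl)]

theorem fwAction_comp_add_right (c : ℝ) :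
    fwAction N u (T₁ - c) (T₂ - c) (fun t => φ (t + c)) (fun t => g (t + c)) =
      fwAction N u T₁ T₂ φ g := by
  rw [fwAction, fwAction, ← preimage_add_const_Icc,
    (measurePreserving_add_right volume c).setIntegral_preimage_emb
      (measurableEmbedding_addRight c) (fun t => ‖g t - u (φ t)‖ ^ 2)]

end fwAction

section quasipotential

variable {u : EuclideanSpace ℝ (Fin N) → EuclideanSpace ℝ (Fin N)} {T : ℝ}
  {φ g : ℝ → EuclideanSpace ℝ (Fin N)} {x y : EuclideanSpace ℝ (Fin N)}

theorem quasipotential_nonneg : 0 ≤ quasipotential N u x y :=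
  Real.sInf_nonneg fun _ ⟨_, _, _, _, _, _, _, ha⟩ => ha ▸ fwAction_nonneg

theorem quasipotential_le_fwAction (hT : 0 < T) (hp : IsAdmissiblePath N 0 T φ g) :
    quasipotential N u (φ 0) (φ T) ≤ fwAction N u 0 T φ g :=
  csInf_le ⟨0, fun _ ⟨_, _, _, _, _, _, _, ha⟩ => ha ▸ fwAction_nonneg⟩
    ⟨T, hT, φ, g, hp, rfl, rfl, rfl⟩

theorem le_quasipotential {c : ℝ}
    (h : ∀ T > 0, ∀ φ g, IsAdmissiblePath N 0 T φ g → φ 0 = x → φ T = y →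
      c ≤ fwAction N u 0 T φ g) :
    c ≤ quasipotential N u x y := by
  refine le_csInf ⟨_, 1, one_pos, _, _, isAdmissiblePath_add_smul 1 x (y - x), by simp, by simp,
    rfl⟩ ?_
  rintro _ ⟨T, hT, φ, g, hp, rfl, rfl, rfl⟩
  exact h T hT φ g hp rfl rfl

theorem quasipotential_add_le_fwAction (hu : Continuous u) (hp : IsAdmissiblePath N 0 T φ g)
    {t : ℝ} (ht : t ∈ Ioo 0 T) :
    quasipotential N u (φ 0) (φ t) + quasipotential N u (φ t) (φ T) ≤ fwAction N u 0 T φ g := by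
  have hshift : IsAdmissiblePath N 0 (T - t) (fun s => φ (s + t)) (fun s => g (s + t)) := by
    simpa using (hp.mono ht.1.le le_rfl).comp_add_right t
  have hQ₂ : quasipotential N u (φ t) (φ T) ≤ fwAction N u t T φ g := by
    rw [← fwAction_comp_add_right t, sub_self]
    simpa using quasipotential_le_fwAction (u := u) (sub_pos.2 ht.2) hshift
  rw [fwAction_add (hp.integrableOn_sq_norm_sub_comp hu) (Ioo_subset_Icc_self ht)]
  exact add_le_add (quasipotential_le_fwAction ht.1 (hp.mono le_rfl ht.2.le)) hQ₂

end quasipotential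

theorem nat_mul_le_quasipotential {u : EuclideanSpace ℝ (Fin N) → EuclideanSpace ℝ (Fin N)}
    (hu : Continuous u) {K ε : ℝ} (hK : 0 < K)
    (h : ∀ a b : EuclideanSpace ℝ (Fin N), K ≤ ‖a - b‖ → ε ≤ quasipotential N u a b) :
    ∀ (n : ℕ) (x y : EuclideanSpace ℝ (Fin N)),
      (n : ℝ) * K ≤ ‖x - y‖ → (n : ℝ) * ε ≤ quasipotential N u x y
  | 0, _, _, _ => by simpa using quasipotential_nonneg
  -- for `n = 1` the sphere of radius `K` may only be reached at the final time
  | 1, x, y, hxy => by simpa using h x y (by simpa using hxy)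
  | n + 2, x, y, hxy => by
    refine le_quasipotential fun T hT φ g hp hx hy => ?_
    subst hx hy
    have hnK : 0 ≤ (n : ℝ) * K := by positivity
    push_cast at hxy ⊢
    obtain ⟨t, ht, hφt⟩ := hp.exists_norm_sub_eq hT.le hK (by rw [norm_sub_rev]; linarith)
    have hQ₁ : ε ≤ quasipotential N u (φ 0) (φ t) := h _ _ (by rw [norm_sub_rev, hφt])
    have hQ₂ : ((n + 1 : ℕ) : ℝ) * ε ≤ quasipotential N u (φ t) (φ T) := by
      refine nat_mul_le_quasipotential hu hK h (n + 1) _ _ ?_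
      have := norm_sub_le_norm_sub_add_norm_sub (φ 0) (φ t) (φ T)
      rw [norm_sub_rev (φ 0) (φ t), hφt] at this
      push_cast
      linarith
    push_cast at hQ₂
    linarith [quasipotential_add_le_fwAction hu hp ht]

theorem div_mul_sub_le_of_forall_nat_mul_le {K ε d q : ℝ} (hK : 0 < K) (hε : 0 ≤ ε) (hd : 0 ≤ d)
    (h : ∀ n : ℕ, (n : ℝ) * K ≤ d → (n : ℝ) * ε ≤ q) :
    ε / K * d - ε ≤ q := by
  set n := ⌊d / K⌋₊
  have hn : (n : ℝ) * K ≤ d := (le_div_iff₀ hK).1 (Nat.floor_le (div_nonneg hd hK.le))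
  have hn' : d < (n + 1) * K := (div_lt_iff₀ hK).1 (Nat.lt_floor_add_one _)
  calc ε / K * d - ε ≤ ε / K * ((n + 1) * K) - ε := by gcongr
    _ = n * ε := by field_simp; ring
    _ ≤ q := h n hn

end

theorem quasipotential_linear_growth_general (N : ℕ)
    (w : EuclideanSpace ℝ (Fin N) → EuclideanSpace ℝ (Fin N)) (hw : Continuous w)
    (K ε : ℝ) (hK : 0 < K) (hε : 0 < ε)
    (h : ∀ a b : EuclideanSpace ℝ (Fin N), K ≤ ‖a - b‖ → ε ≤ quasipotential N w a b) :
    (∀ (n : ℕ) (x y : EuclideanSpace ℝ (Fin N)),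
      (n : ℝ) * K ≤ ‖x - y‖ → (n : ℝ) * ε ≤ quasipotential N w x y) ∧
    (∀ x y : EuclideanSpace ℝ (Fin N),
      ε / K * ‖x - y‖ - ε ≤ quasipotential N w x y) := by
  have hchain := nat_mul_le_quasipotential hw hK h
  exact ⟨hchain, fun x y =>
    div_mul_sub_le_of_forall_nat_mul_le hK hε.le (norm_nonneg _) fun n hn => hchain n x y hn⟩

/-- Chaining: if `Q_w(a,b) ≥ ε` whenever `‖a − b‖ ≥ K`, then
`Q_w(x,y) ≥ n·ε` whenever `‖x − y‖ ≥ n·K`, and consequently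
`Q_w(x,y) ≥ (ε/K)·‖x − y‖ − ε` for all `x, y`. -/
theorem quasipotential_linear_growth (N : ℕ) (hN : 1 ≤ N)
    (w : EuclideanSpace ℝ (Fin N) → EuclideanSpace ℝ (Fin N)) (hw : Continuous w)
    (K ε : ℝ) (hK : 0 < K) (hε : 0 < ε)
    (h : ∀ a b : EuclideanSpace ℝ (Fin N), K ≤ ‖a - b‖ → ε ≤ quasipotential N w a b) :
    (∀ (n : ℕ) (x y : EuclideanSpace ℝ (Fin N)),
      (n : ℝ) * K ≤ ‖x - y‖ → (n : ℝ) * ε ≤ quasipotential N w x y) ∧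
    (∀ x y : EuclideanSpace ℝ (Fin N),
      ε / K * ‖x - y‖ - ε ≤ quasipotential N w x y) :=
  quasipotential_linear_growth_general N w hw K ε hK hε h
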